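/- arXiv:2311.03344 — 3 statements merged into one kernel-verified Lean document; each statement's English description precedes it below -/
import Mathlib

section
/- Let d, l ≥ 1 be integers and let M ⊆ P([d]) be non-empty. If A is an order-d lattice subset such that cov_M(A \ E) ≥ d^d·|M|·l, where E is the set of points of [n₁]×⋯×[n_d] that do not have all coordinates pairwise distinct, then there exist pairwise disjoint subsets X₁ ⊆ [n₁], …, X_d ⊆ [n_d] such that cov_M(A ∩ (X₁×⋯×X_d)) ≥ l. -/
open Finset

/-- A `B`-subspace of `[n₁]×⋯×[n_d]`: the set of points agreeing with some point `u`
on all coordinates outside `B`. -/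
def IsBSubspace {d : ℕ} (n : Fin d → ℕ) (B : Finset (Fin d))
    (S : Set (∀ j, Fin (n j))) : Prop :=
  ∃ u : ∀ j, Fin (n j), S = {x | ∀ j ∉ B, x j = u j}

/-- An `M`-subspace: a `B`-subspace for some `B ∈ M`. -/
def IsMSubspace {d : ℕ} (n : Fin d → ℕ) (M : Finset (Finset (Fin d)))
    (S : Set (∀ j, Fin (n j))) : Prop :=
  ∃ B ∈ M, IsBSubspace n B S

/-- The `M`-covering number: the least `k` such that `A` is covered by `k` `M`-subspaces. -/
noncomputable def covM {d : ℕ} (n : Fin d → ℕ) (M : Finset (Finset (Fin d)))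
    (A : Set (∀ j, Fin (n j))) : ℕ :=
  sInf {k | ∃ S : Fin k → Set (∀ j, Fin (n j)),
    (∀ i, IsMSubspace n M (S i)) ∧ A ⊆ ⋃ i, S i}

/-!
Call a set of points `M`-independent if no `M`-subspace contains two of them, and take a
maximal `M`-independent set `P` inside `A \ E`. By maximality the `|M|` subspaces through the
points of `P` cover `A \ E`, so `|P| ≥ d^d l`. Now colour the coordinate values with `d` colours
uniformly at random and let `X j` be the `j`-th colour class. A point with pairwise distinct
coordinates lies in `X 1 × ⋯ × X d` with probability `d^(-d)`, so some colouring keeps at least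
`l` points of `P`; these stay independent, and an independent set of size `l` needs `l`
subspaces to be covered.
-/

section Covering

variable {d : ℕ} {n : Fin d → ℕ} {M : Finset (Finset (Fin d))}

def bSubspace (n : Fin d → ℕ) (B : Finset (Fin d)) (u : ∀ j, Fin (n j)) :
    Set (∀ j, Fin (n j)) :=
  {x | ∀ j ∉ B, x j = u j}

lemma mem_bSubspace_self (B : Finset (Fin d)) (u : ∀ j, Fin (n j)) : u ∈ bSubspace n B u :=
  fun _ _ => rfl

lemma mem_bSubspace_comm {B : Finset (Fin d)} {u x : ∀ j, Fin (n j)} :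
    x ∈ bSubspace n B u ↔ u ∈ bSubspace n B x :=
  ⟨fun h j hj => (h j hj).symm, fun h j hj => (h j hj).symm⟩

lemma isMSubspace_bSubspace {B : Finset (Fin d)} (hB : B ∈ M) (u : ∀ j, Fin (n j)) :
    IsMSubspace n M (bSubspace n B u) :=
  ⟨B, hB, u, rfl⟩

def IsMIndependent (n : Fin d → ℕ) (M : Finset (Finset (Fin d))) (P : Set (∀ j, Fin (n j))) :
    Prop :=
  P.Pairwise fun p q => ∀ B ∈ M, q ∉ bSubspace n B p

lemma IsMIndependent.mono {P Q : Finset (∀ j, Fin (n j))} (hQP : Q ⊆ P)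
    (hP : IsMIndependent n M P) : IsMIndependent n M Q :=
  Set.Pairwise.mono (coe_subset.mpr hQP) hP

lemma covM_le_card_of_forall_mem {ι : Type*} {A : Set (∀ j, Fin (n j))} (s : Finset ι)
    (S : ι → Set (∀ j, Fin (n j))) (hS : ∀ i ∈ s, IsMSubspace n M (S i))
    (hA : ∀ a ∈ A, ∃ i ∈ s, a ∈ S i) :
    covM n M A ≤ #s := by
  refine Nat.sInf_le ⟨fun k => S (s.equivFin.symm k), fun k => hS _ (s.equivFin.symm k).2, ?_⟩
  intro a ha
  obtain ⟨i, hi, hai⟩ := hA a ha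
  exact Set.mem_iUnion.mpr ⟨s.equivFin ⟨i, hi⟩, by simpa using hai⟩

lemma exists_cover_covM (hM : M.Nonempty) (A : Set (∀ j, Fin (n j))) :
    ∃ S : Fin (covM n M A) → Set (∀ j, Fin (n j)),
      (∀ i, IsMSubspace n M (S i)) ∧ A ⊆ ⋃ i, S i := by
  obtain ⟨B, hB⟩ := hM
  have hne : {k | ∃ S : Fin k → Set (∀ j, Fin (n j)),
      (∀ i, IsMSubspace n M (S i)) ∧ A ⊆ ⋃ i, S i}.Nonempty :=
    ⟨_, fun i => bSubspace n B ((Fintype.equivFin _).symm i),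
      fun i => isMSubspace_bSubspace hB _,
      fun a _ => Set.mem_iUnion.mpr ⟨Fintype.equivFin _ a, by simpa using mem_bSubspace_self B a⟩⟩
  exact Nat.sInf_mem hne

lemma IsMIndependent.card_le_covM (hM : M.Nonempty) {P : Finset (∀ j, Fin (n j))}
    {A : Set (∀ j, Fin (n j))} (hP : IsMIndependent n M P) (hPA : ↑P ⊆ A) :
    #P ≤ covM n M A := by
  classical
  obtain ⟨S, hS, hAS⟩ := exists_cover_covM hM A
  calc #P ≤ #(univ : Finset (Fin (covM n M A))) := by
        refine card_le_card_of_forall_subsingleton (fun p i => p ∈ S i)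
          (fun p hp => ?_) (fun i _ p hp q hq => ?_)
        · obtain ⟨i, hi⟩ := Set.mem_iUnion.mp (hAS (hPA hp))
          exact ⟨i, mem_univ i, hi⟩
        · obtain ⟨B, hB, u, hu⟩ := hS i
          have hpu : p ∈ bSubspace n B u := by rw [bSubspace, ← hu]; exact hp.2
          have hqu : q ∈ bSubspace n B u := by rw [bSubspace, ← hu]; exact hq.2
          by_contra hpq
          exact hP hp.1 hq.1 hpq B hB fun j hj => (hqu j hj).trans (hpu j hj).symm
    _ = covM n M A := by simp

lemma exists_isMIndependent_subset_forall_mem_bSubspace (hM : M.Nonempty)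
    (Y : Finset (∀ j, Fin (n j))) :
    ∃ P ⊆ Y, IsMIndependent n M P ∧ ∀ y ∈ Y, ∃ p ∈ P, ∃ B ∈ M, y ∈ bSubspace n B p := by
  classical
  obtain ⟨P, hPmem, hPmax⟩ :=
    exists_max_image (Y.powerset.filter fun P : Finset _ => IsMIndependent n M (P : Set _)) card
      ⟨∅, mem_filter.mpr ⟨empty_mem_powerset Y, by simp [IsMIndependent]⟩⟩
  obtain ⟨hPY, hPind⟩ := mem_filter.mp hPmem
  refine ⟨P, mem_powerset.mp hPY, hPind, fun y hy => ?_⟩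
  by_contra! hfar
  obtain ⟨B, hB⟩ := hM
  have hyP : y ∉ P := fun hyP => hfar y hyP B hB (mem_bSubspace_self B y)
  have hins : IsMIndependent n M (insert y P : Finset _) := by
    rw [coe_insert]
    exact hPind.insert fun p hp _ => ⟨fun B hB h => hfar p hp B hB (mem_bSubspace_comm.mp h),
      fun B hB => hfar p hp B hB⟩
  have := hPmax (insert y P) (mem_filter.mpr
    ⟨mem_powerset.mpr (insert_subset hy (mem_powerset.mp hPY)), hins⟩)
  rw [card_insert_of_notMem hyP] at this
  omega

lemma exists_isMIndependent_subset_covM_le_card_mul (hM : M.Nonempty) (D : Set (∀ j, Fin (n j))) :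
    ∃ P : Finset (∀ j, Fin (n j)), ↑P ⊆ D ∧ IsMIndependent n M P ∧ covM n M D ≤ #P * #M := by
  obtain ⟨P, hPD, hPind, hPdom⟩ :=
    exists_isMIndependent_subset_forall_mem_bSubspace hM D.toFinite.toFinset
  refine ⟨P, fun p hp => (Set.Finite.mem_toFinset _).mp (hPD hp), hPind, ?_⟩
  rw [← card_product]
  refine covM_le_card_of_forall_mem _ (fun q => bSubspace n q.2 q.1)
    (fun q hq => isMSubspace_bSubspace (mem_product.mp hq).2 _) fun x hx => ?_
  obtain ⟨p, hp, B, hB, hxB⟩ := hPdom x ((Set.Finite.mem_toFinset _).mpr hx)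
  exact ⟨(p, B), mem_product.mpr ⟨hp, hB⟩, hxB⟩

end Covering

theorem card_filter_leftInverse {α β : Type*} [Fintype α] [DecidableEq α]
    [Fintype β] [DecidableEq β] {v : β → α} (hv : Function.Injective v) :
    #{c : α → β | ∀ j, c (v j) = j} = Fintype.card β ^ (Fintype.card α - Fintype.card β) := by
  -- `t x` is `{i}` when `x = v i`, and all of `β` off the range of `v`.
  set t : α → Finset β := fun x => {j | ∀ i, v i = x → i = j}
  have hfilter : ({c : α → β | ∀ j, c (v j) = j} : Finset _) = Fintype.piFinset t := by
    ext c
    simp only [mem_filter, mem_univ, true_and, Fintype.mem_piFinset, t]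
    exact ⟨fun h x i hi => hi ▸ (h i).symm, fun h j => (h _ j rfl).symm⟩
  have ht : ∀ x, #(t x) = if x ∈ univ.image v then 1 else Fintype.card β := by
    intro x
    split_ifs with hx
    · obtain ⟨i, -, rfl⟩ := mem_image.mp hx
      rw [card_eq_one]
      exact ⟨i, by ext j; simp [t, hv.eq_iff, eq_comm]⟩
    · rw [← card_univ]
      congr 1
      ext j
      simp_all [t]
  rw [hfilter, Fintype.card_piFinset, Finset.prod_congr rfl fun x _ => ht x, prod_ite,
    prod_const_one, one_mul, prod_const, filter_not, filter_mem_eq_inter, univ_inter,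
    card_univ_sdiff, card_image_of_injective _ hv, card_univ]

theorem exists_coloring_large_subset_leftInverse {ι α β : Type*} [Fintype α] [DecidableEq α]
    [Fintype β] [DecidableEq β] [Nonempty β] (P : Finset ι) (v : ι → β → α)
    (hv : ∀ p ∈ P, Function.Injective (v p)) :
    ∃ c : α → β, ∃ Q ⊆ P,
      (∀ p ∈ Q, ∀ j, c (v p j) = j) ∧ #P ≤ Fintype.card β ^ Fintype.card β * #Q := by
  rcases P.eq_empty_or_nonempty with rfl | ⟨p₀, hp₀⟩
  · exact ⟨fun _ => Classical.arbitrary β, ∅, empty_subset _, by simp, by simp⟩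
  have hβα : Fintype.card β ≤ Fintype.card α := Fintype.card_le_of_injective _ (hv p₀ hp₀)
  have hcount : ∑ c : α → β, #{p ∈ P | ∀ j, c (v p j) = j} =
      ∑ p ∈ P, Fintype.card β ^ (Fintype.card α - Fintype.card β) := by
    rw [← sum_congr rfl fun p hp => card_filter_leftInverse (hv p hp)]
    exact sum_card_bipartiteAbove_eq_sum_card_bipartiteBelow
      (fun (c : α → β) p => ∀ j, c (v p j) = j)
  have hsum : ∑ _c : α → β, #P ≤
      ∑ c : α → β, Fintype.card β ^ Fintype.card β * #{p ∈ P | ∀ j, c (v p j) = j} := by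
    rw [← mul_sum, hcount, sum_const, sum_const, card_univ, Fintype.card_fun, smul_eq_mul,
      smul_eq_mul, mul_left_comm, ← pow_add, Nat.add_sub_cancel' hβα, mul_comm]
  obtain ⟨c, -, hc⟩ := exists_le_of_sum_le univ_nonempty hsum
  exact ⟨c, _, filter_subset _ P, fun p hp => (mem_filter.mp hp).2, hc⟩

theorem exists_pairwise_disjoint_large_subset_mem_pi {d : ℕ} (hd : 0 < d) {n : Fin d → ℕ}
    (P : Finset (∀ j, Fin (n j))) (hP : ∀ p ∈ P, ∀ i j, (p i : ℕ) = p j → i = j) :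
    ∃ X : ∀ j, Set (Fin (n j)),
      (∀ i j : Fin d, i ≠ j → ∀ a ∈ X i, ∀ b ∈ X j, (a : ℕ) ≠ (b : ℕ)) ∧
      ∃ Q ⊆ P, (∀ q ∈ Q, ∀ j, q j ∈ X j) ∧ #P ≤ d ^ d * #Q := by
  have hnN (j : Fin d) : n j ≤ univ.sup n := le_sup (mem_univ j)
  let v (p : ∀ j, Fin (n j)) (j : Fin d) : Fin (univ.sup n) := Fin.castLE (hnN j) (p j)
  have : Nonempty (Fin d) := Fin.pos_iff_nonempty.mp hd
  obtain ⟨c, Q, hQP, hQc, hPQ⟩ := exists_coloring_large_subset_leftInverse P v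
    fun p hp i j hij => hP p hp i j (congrArg Fin.val hij)
  rw [Fintype.card_fin] at hPQ
  refine ⟨fun j => {a | c (Fin.castLE (hnN j) a) = j}, ?_, Q, hQP, hQc, hPQ⟩
  intro i j hij a ha b hb hab
  exact hij (ha.symm.trans ((congrArg c (Fin.ext hab)).trans hb))

theorem off_diagonal_covering_number_general {d l : ℕ} (hd : 0 < d)
    (n : Fin d → ℕ)
    (M : Finset (Finset (Fin d))) (hM : M.Nonempty)
    (A : Set (∀ j, Fin (n j)))
    (hA : d ^ d * M.card * l ≤
      covM n M (A \ {x | ∃ i j : Fin d, i ≠ j ∧ (x i : ℕ) = (x j : ℕ)})) :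
    ∃ X : ∀ j, Set (Fin (n j)),
      (∀ i j : Fin d, i ≠ j → ∀ a ∈ X i, ∀ b ∈ X j, (a : ℕ) ≠ (b : ℕ)) ∧
      l ≤ covM n M (A ∩ {x | ∀ j, x j ∈ X j}) := by
  obtain ⟨P, hPD, hPind, hcovD⟩ := exists_isMIndependent_subset_covM_le_card_mul hM
    (A \ {x | ∃ i j : Fin d, i ≠ j ∧ (x i : ℕ) = (x j : ℕ)})
  have hPcard : d ^ d * l ≤ #P :=
    Nat.le_of_mul_le_mul_right (by rw [mul_right_comm]; exact hA.trans hcovD) (card_pos.mpr hM)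
  obtain ⟨X, hX, Q, hQP, hQX, hPQ⟩ := exists_pairwise_disjoint_large_subset_mem_pi hd P
    fun p hp i j hij => by_contra fun hne => (hPD hp).2 ⟨i, j, hne, hij⟩
  refine ⟨X, hX, ?_⟩
  calc l ≤ #Q := Nat.le_of_mul_le_mul_left (hPcard.trans hPQ) Nat.pow_self_pos
    _ ≤ _ := (hPind.mono hQP).card_le_covM hM fun q hq =>
        show q ∈ A ∩ {x | ∀ j, x j ∈ X j} from ⟨(hPD (hQP hq)).1, hQX q hq⟩

theorem off_diagonal_covering_number {d l : ℕ} (hd : 0 < d) (hl : 0 < l)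
    (n : Fin d → ℕ) (hn : ∀ j, 0 < n j)
    (M : Finset (Finset (Fin d))) (hM : M.Nonempty)
    (A : Set (∀ j, Fin (n j)))
    (hA : d ^ d * M.card * l ≤
      covM n M (A \ {x | ∃ i j : Fin d, i ≠ j ∧ (x i : ℕ) = (x j : ℕ)})) :
    ∃ X : ∀ j, Set (Fin (n j)),
      (∀ i j : Fin d, i ≠ j → ∀ a ∈ X i, ∀ b ∈ X j, (a : ℕ) ≠ (b : ℕ)) ∧
      l ≤ covM n M (A ∩ {x | ∀ j, x j ∈ X j}) :=
  off_diagonal_covering_number_general hd n M hM A hA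
end

section
/- Let d ≥ 1 and l ≥ 1 be integers, let M ⊆ P([d]) be non-empty, and let A be an order-d lattice subset with M-covering number at least l. Then the M-independence number of A satisfies I_M(A) ≥ cov_M(A)/|M|. -/
/-!
Take an `M`-independent subset `s ⊆ A` of maximum size. Every point of `A` lies in a common
`M`-subspace with some point of `s` (otherwise it could be added to `s`), so the `|M| · |s|`
subspaces `{x | ∀ j ∉ B, x j = u j}` with `B ∈ M`, `u ∈ s` cover `A`.
-/

open Finset

/-- The M-independence number: the largest size of a subset of A no two distinct
points of which lie in a common M-subspace. -/
noncomputable def indepM {d : ℕ} (n : Fin d → ℕ) (M : Finset (Finset (Fin d)))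
    (A : Set (∀ j, Fin (n j))) : ℕ :=
  sSup {m | ∃ A' : Set (∀ j, Fin (n j)), A' ⊆ A ∧ A'.ncard = m ∧
    ∀ x ∈ A', ∀ y ∈ A', x ≠ y → ∀ S, IsMSubspace n M S → ¬(x ∈ S ∧ y ∈ S)}

theorem exists_pairwise_not_rel_dominating {α : Type*} [Finite α] (r : α → α → Prop)
    (hrefl : ∀ a, r a a) (hsymm : ∀ a b, r a b → r b a) (A : Set α) :
    ∃ s : Finset α, ↑s ⊆ A ∧ (s : Set α).Pairwise (fun x y => ¬ r x y) ∧
      ∀ a ∈ A, ∃ x ∈ s, r a x := by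
  classical
  have := Fintype.ofFinite α
  let P : Finset α → Prop := fun s => ↑s ⊆ A ∧ (s : Set α).Pairwise (fun x y => ¬ r x y)
  obtain ⟨s, hsP, hsmax⟩ := (univ.filter P).exists_max_image card
    ⟨∅, mem_filter.mpr ⟨mem_univ _, by simp [P]⟩⟩
  obtain ⟨-, hsA, hs⟩ := mem_filter.mp hsP
  refine ⟨s, hsA, hs, fun a ha => ?_⟩
  by_contra! hfar
  have has : a ∉ s := fun has => hfar a has (hrefl a)
  have hins : P (insert a s) := by
    refine ⟨by simpa [Set.insert_subset_iff] using ⟨ha, hsA⟩, ?_⟩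
    rw [coe_insert, Set.pairwise_insert_of_notMem has]
    exact ⟨hs, fun x hx => ⟨hfar x hx, fun h => hfar x hx (hsymm x a h)⟩⟩
  have := hsmax _ (mem_filter.mpr ⟨mem_univ _, hins⟩)
  rw [card_insert_of_notMem has] at this
  omega

section Lattice

variable {d : ℕ} (n : Fin d → ℕ) (M : Finset (Finset (Fin d)))

def MRelated (x y : ∀ j, Fin (n j)) : Prop :=
  ∃ B ∈ M, ∀ j ∉ B, x j = y j

variable {n M}

theorem MRelated.refl (hM : M.Nonempty) (x : ∀ j, Fin (n j)) : MRelated n M x x :=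
  let ⟨B, hB⟩ := hM
  ⟨B, hB, fun _ _ => rfl⟩

theorem MRelated.symm {x y : ∀ j, Fin (n j)} : MRelated n M x y → MRelated n M y x :=
  fun ⟨B, hB, h⟩ => ⟨B, hB, fun j hj => (h j hj).symm⟩

theorem IsMSubspace.mRelated {S : Set (∀ j, Fin (n j))} (hS : IsMSubspace n M S)
    {x y : ∀ j, Fin (n j)} (hx : x ∈ S) (hy : y ∈ S) : MRelated n M x y := by
  obtain ⟨B, hB, u, rfl⟩ := hS
  exact ⟨B, hB, fun j hj => (hx j hj).trans (hy j hj).symm⟩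

theorem covM_le_card {ι : Type*} [Fintype ι] {A : Set (∀ j, Fin (n j))}
    (S : ι → Set (∀ j, Fin (n j))) (hS : ∀ i, IsMSubspace n M (S i)) (hA : A ⊆ ⋃ i, S i) :
    covM n M A ≤ Fintype.card ι := by
  classical
  let e := Fintype.equivFin ι
  refine Nat.sInf_le ⟨S ∘ e.symm, fun i => hS _, fun a ha => ?_⟩
  obtain ⟨i, hi⟩ := Set.mem_iUnion.mp (hA ha)
  exact Set.mem_iUnion.mpr ⟨e i, by simpa using hi⟩

theorem covM_le_card_mul_of_dominating {A : Set (∀ j, Fin (n j))} (s : Finset (∀ j, Fin (n j)))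
    (hdom : ∀ a ∈ A, ∃ x ∈ s, MRelated n M a x) :
    covM n M A ≤ M.card * s.card := by
  have hcov := covM_le_card (fun p : M × s => {y | ∀ j ∉ (p.1 : Finset (Fin d)), y j = p.2.1 j})
    (fun p => ⟨p.1, p.1.2, p.2, rfl⟩) fun a ha => by
      obtain ⟨x, hx, B, hB, h⟩ := hdom a ha
      exact Set.mem_iUnion.mpr ⟨(⟨B, hB⟩, ⟨x, hx⟩), h⟩
  simpa using hcov

theorem card_le_indepM {A : Set (∀ j, Fin (n j))} (s : Finset (∀ j, Fin (n j))) (hsA : ↑s ⊆ A)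
    (hs : (s : Set (∀ j, Fin (n j))).Pairwise fun x y => ¬ MRelated n M x y) :
    s.card ≤ indepM n M A := by
  refine le_csSup ⟨Nat.card (∀ j, Fin (n j)), ?_⟩ ⟨s, hsA, Set.ncard_coe_finset s, ?_⟩
  · rintro m ⟨A', -, rfl, -⟩
    exact Set.ncard_le_card A'
  · rintro x hx y hy hxy S hS ⟨hxS, hyS⟩
    exact hs hx hy hxy (hS.mRelated hxS hyS)

end Lattice

theorem independence_bound_general {d : ℕ}
    (n : Fin d → ℕ)
    (M : Finset (Finset (Fin d))) (hM : M.Nonempty)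
    (A : Set (∀ j, Fin (n j))) :
    covM n M A ≤ M.card * indepM n M A := by
  obtain ⟨s, hsA, hs, hdom⟩ :=
    exists_pairwise_not_rel_dominating (MRelated n M) (MRelated.refl hM)
      (fun _ _ => MRelated.symm) A
  calc covM n M A ≤ M.card * s.card := covM_le_card_mul_of_dominating s hdom
    _ ≤ M.card * indepM n M A := Nat.mul_le_mul_left _ (card_le_indepM s hsA hs)

theorem independence_bound {d l : ℕ} (hd : 0 < d) (hl : 0 < l)
    (n : Fin d → ℕ) (hn : ∀ j, 0 < n j)
    (M : Finset (Finset (Fin d))) (hM : M.Nonempty)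
    (A : Set (∀ j, Fin (n j))) (hA : l ≤ covM n M A) :
    covM n M A ≤ M.card * indepM n M A :=
  independence_bound_general n M hM A
end

section
/- Let d ≥ 1, let M ⊆ P([d]) be non-empty, and let A be an order-d lattice subset. Suppose there exists a non-empty C ⊆ [d] and a C-subspace S such that the C*-covering number of A ∩ S is at least cov_M(A) + 1, where C* = {C \ {j} : j ∈ C}. Then every minimal-length M-covering decomposition of A (i.e., every tuple of M-subspaces S₁, …, S_k with k = cov_M(A) and A ⊆ S₁ ∪ ⋯ ∪ S_k) contains some S_i with S ⊆ S_i. -/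
open Finset

/-!
If no subspace of a minimal decomposition `S₁, …, S_k` of `A` contains the `C`-subspace `S`,
then each `S_i ∩ S` lies in a single `C*`-subspace: a `B`-subspace meeting `S` but not
containing it must miss some direction `j ∈ C`, so on `S_i ∩ S` the coordinate `j` is frozen
as well. Hence `A ∩ S` is covered by `k = cov_M(A)` many `C*`-subspaces, contradicting the
assumed lower bound on its `C*`-covering number.
-/

section Subspaces

variable {d : ℕ} {n : Fin d → ℕ}

theorem IsBSubspace.eq_of_mem {B : Finset (Fin d)} {S : Set (∀ j, Fin (n j))}
    (hS : IsBSubspace n B S) {w : ∀ j, Fin (n j)} (hw : w ∈ S) :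
    S = {x | ∀ j ∉ B, x j = w j} := by
  obtain ⟨u, rfl⟩ := hS
  ext x
  exact forall₂_congr fun j hj => by rw [hw j hj]

theorem IsBSubspace.subset_of_subset_of_mem_inter {B C : Finset (Fin d)}
    {S T : Set (∀ j, Fin (n j))} (hS : IsBSubspace n C S) (hT : IsBSubspace n B T)
    (hCB : C ⊆ B) {w : ∀ j, Fin (n j)} (hw : w ∈ S ∩ T) : S ⊆ T := by
  rw [hS.eq_of_mem hw.1, hT.eq_of_mem hw.2]
  exact fun x hx j hj => hx j fun hjC => hj (hCB hjC)

theorem IsBSubspace.inter_subset_erase {B C : Finset (Fin d)} {S T : Set (∀ j, Fin (n j))}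
    (hS : IsBSubspace n C S) (hT : IsBSubspace n B T) {j : Fin d} (hjB : j ∉ B)
    {w : ∀ j, Fin (n j)} (hw : w ∈ S ∩ T) :
    S ∩ T ⊆ {x | ∀ l ∉ C.erase j, x l = w l} := by
  rw [hS.eq_of_mem hw.1, hT.eq_of_mem hw.2]
  rintro x ⟨hxS, hxT⟩ l hl
  by_cases hlj : l = j
  · exact hxT l (hlj ▸ hjB)
  · exact hxS l fun hlC => hl (mem_erase.mpr ⟨hlj, hlC⟩)

theorem IsBSubspace.exists_erase_subspace_of_not_subset {B C : Finset (Fin d)}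
    {S T : Set (∀ j, Fin (n j))} (hC : C.Nonempty) (hS : IsBSubspace n C S)
    (hT : IsBSubspace n B T) (hST : ¬ S ⊆ T) :
    ∃ U, IsMSubspace n (C.image fun j => C.erase j) U ∧ S ∩ T ⊆ U := by
  rcases (S ∩ T).eq_empty_or_nonempty with hempty | ⟨w, hw⟩
  · obtain ⟨j, hj⟩ := hC
    obtain ⟨u, -⟩ := hS
    exact ⟨_, ⟨C.erase j, mem_image_of_mem _ hj, u, rfl⟩,
      hempty.symm ▸ Set.empty_subset _⟩
  · obtain ⟨j, hjC, hjB⟩ :=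
      not_subset.mp fun hCB => hST (hS.subset_of_subset_of_mem_inter hT hCB hw)
    exact ⟨_, ⟨C.erase j, mem_image_of_mem _ hjC, w, rfl⟩,
      hS.inter_subset_erase hT hjB hw⟩

theorem covM_le_of_subset_iUnion {M : Finset (Finset (Fin d))} {A : Set (∀ j, Fin (n j))}
    {k : ℕ} (T : Fin k → Set (∀ j, Fin (n j))) (hT : ∀ i, IsMSubspace n M (T i))
    (hA : A ⊆ ⋃ i, T i) : covM n M A ≤ k :=
  Nat.sInf_le ⟨T, hT, hA⟩

end Subspaces

theorem forced_subspace_in_minimal_decomposition_general {d : ℕ}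
    (n : Fin d → ℕ)
    (M : Finset (Finset (Fin d)))
    (A : Set (∀ j, Fin (n j)))
    (C : Finset (Fin d)) (hC : C.Nonempty)
    (S : Set (∀ j, Fin (n j))) (hS : IsBSubspace n C S)
    (hrich : covM n M A + 1 ≤ covM n (C.image fun j => C.erase j) (A ∩ S)) :
    ∀ Ss : Fin (covM n M A) → Set (∀ j, Fin (n j)),
      (∀ i, IsMSubspace n M (Ss i)) → A ⊆ ⋃ i, Ss i → ∃ i, S ⊆ Ss i := by
  intro Ss hSs hcov
  by_contra! hno
  have hpieces : ∀ i, ∃ U, IsMSubspace n (C.image fun j => C.erase j) U ∧ S ∩ Ss i ⊆ U :=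
    fun i => by
      obtain ⟨B, -, hB⟩ := hSs i
      exact hS.exists_erase_subspace_of_not_subset hC hB (hno i)
  choose U hU hSU using hpieces
  have hcovS : A ∩ S ⊆ ⋃ i, U i := by
    rintro x ⟨hxA, hxS⟩
    obtain ⟨i, hxi⟩ := Set.mem_iUnion.mp (hcov hxA)
    exact Set.mem_iUnion.mpr ⟨i, hSU i ⟨hxS, hxi⟩⟩
  have hle := covM_le_of_subset_iUnion U hU hcovS
  omega

theorem forced_subspace_in_minimal_decomposition {d : ℕ} (hd : 0 < d)
    (n : Fin d → ℕ) (hn : ∀ j, 0 < n j)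
    (M : Finset (Finset (Fin d))) (hM : M.Nonempty)
    (A : Set (∀ j, Fin (n j)))
    (C : Finset (Fin d)) (hC : C.Nonempty)
    (S : Set (∀ j, Fin (n j))) (hS : IsBSubspace n C S)
    (hrich : covM n M A + 1 ≤ covM n (C.image fun j => C.erase j) (A ∩ S)) :
    ∀ Ss : Fin (covM n M A) → Set (∀ j, Fin (n j)),
      (∀ i, IsMSubspace n M (Ss i)) → A ⊆ ⋃ i, Ss i → ∃ i, S ⊆ Ss i :=
  forced_subspace_in_minimal_decomposition_general n M A C hC S hS hrich
end
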